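/- arXiv:0710.3801 — 3 statements merged into one kernel-verified Lean document; each statement's English description precedes it below -/
import Mathlib

section
/- Let T(x) be a formal power series in x ∈ ℝ^N. If for every vector v ∈ ℝ^N the power series t ↦ T(tv) in the single real variable t is convergent (has positive radius of convergence), then T itself is convergent (has positive radius of convergence as a multivariate power series). -/
open scoped BigOperators

noncomputable section

/-- A formal power series in one real variable is convergent (has positive radius of
convergence) iff its coefficients satisfy a bound `|a_n| r^n ≤ C` for some `r > 0`. -/
def PowerSeriesConvergent (f : PowerSeries ℝ) : Prop :=
  ∃ r C : ℝ, 0 < r ∧ ∀ n : ℕ, |PowerSeries.coeff n f| * r ^ n ≤ C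

/-- A formal power series in `N` real variables is convergent (has positive radius of
convergence) iff its coefficients satisfy `|a_d| r^{|d|} ≤ C` for some `r > 0`. -/
def MvPowerSeriesConvergent {N : ℕ} (T : MvPowerSeries (Fin N) ℝ) : Prop :=
  ∃ r C : ℝ, 0 < r ∧ ∀ d : Fin N →₀ ℕ,
    |MvPowerSeries.coeff d T| * r ^ (d.sum fun _ k => k) ≤ C

/-- The restriction of the formal power series `T` to the line `t ↦ t • v`: the formal
power series in one variable `t` whose `n`-th coefficient collects all the degree `n`
monomials of `T` evaluated at `v`. -/
def lineSeries {N : ℕ} (T : MvPowerSeries (Fin N) ℝ) (v : Fin N → ℝ) : PowerSeries ℝ :=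
  PowerSeries.mk fun n =>
    ∑' d : {d : Fin N →₀ ℕ // (d.sum fun _ k => k) = n},
      MvPowerSeries.coeff d.1 T * ∏ i, v i ^ d.1 i

/-!
The `n`-th coefficient of `t ↦ T (t • v)` is `P_n (v)`, where `P_n` is the homogeneous part of
degree `n` of `T`. The closed sets `{v | ∀ n, |P_n v| (m + 1)⁻ⁿ ≤ k}` cover `ℝ^N`, so by Baire one
of them contains a ball `B(a, ε)`, on which the `P_n` grow at most geometrically. For `|d| = n`,
the iterated finite difference of `P_n` of order `d` and step `h = ε / (n + 1)` on the grid
`a + h • s`, `s ≤ d`, stays in the ball and equals `d! hⁿ` times the coefficient of `xᵈ`; together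
with `(n + 1)ⁿ ≤ d! e^{N (n + 1)}` this bounds the coefficients of `T` geometrically.
-/

open Finset
open scoped Nat

section FiniteDifferences

variable {K : Type*} [Field K]

theorem alternating_sum_choose_mul_add_pow (b : K) {k m : ℕ} (hk : k ≤ m) :
    ∑ t ∈ range (m + 1), (-1 : K) ^ (m - t) * m.choose t * (b + t) ^ k =
      if k = m then (m ! : K) else 0 := by
  have hshift := fwdDiff_iter_eq_sum_shift (1 : K) (fun x => x ^ k) m b
  simp only [nsmul_eq_mul, mul_one, zsmul_eq_mul] at hshift
  push_cast at hshift
  rw [← hshift]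
  rcases hk.lt_or_eq with hlt | rfl
  · rw [fwdDiff_iter_pow_eq_zero_of_lt hlt, if_neg hlt.ne]
    rfl
  · rw [fwdDiff_iter_eq_factorial, if_pos rfl]
    rfl

theorem alternating_sum_choose_mul_add_mul_pow (a : K) {h : K} (hh : h ≠ 0) {k m : ℕ} (hk : k ≤ m) :
    ∑ t ∈ range (m + 1), (-1 : K) ^ (m - t) * m.choose t * (a + h * t) ^ k =
      if k = m then (m ! : K) * h ^ m else 0 := by
  have hscale : ∀ t : K, (a + h * t) ^ k = h ^ k * (a / h + t) ^ k := fun t => by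
    rw [← mul_pow]; congr 1; field_simp
  simp_rw [hscale, mul_left_comm _ (h ^ k), ← mul_sum, alternating_sum_choose_mul_add_pow _ hk]
  split_ifs with hkm
  · rw [hkm, mul_comm]
  · rw [mul_zero]

end FiniteDifferences

theorem Finsupp.exists_lt_apply_of_degree_le {σ : Type*} {d e : σ →₀ ℕ} (hne : e ≠ d)
    (hle : e.degree ≤ d.degree) : ∃ j, e j < d j := by
  by_contra! hde
  have hsplit : e = d + (e - d) := (add_tsub_cancel_of_le hde).symm
  rw [hsplit, map_add] at hle
  have hzero : e - d = 0 := (Finsupp.degree_eq_zero_iff _).1 (by omega)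
  exact hne (by rw [hsplit, hzero, add_zero])

theorem Finsupp.pow_degree_le_prod_factorial_mul_exp_pow {σ : Type*} [Fintype σ] (d : σ →₀ ℕ)
    {x : ℝ} (hx : 0 ≤ x) :
    x ^ d.degree ≤ (∏ j, ((d j)! : ℝ)) * Real.exp x ^ Fintype.card σ := by
  rw [Finsupp.degree_eq_sum, ← prod_pow_eq_pow_sum, ← card_univ, ← prod_const,
    ← prod_mul_distrib]
  refine prod_le_prod (fun j _ => by positivity) fun j _ => ?_
  have := Real.pow_div_factorial_le_exp _ hx (d j)
  rwa [div_le_iff₀ (by positivity), mul_comm] at this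

theorem sum_piFinset_prod_choose {R σ : Type*} [CommSemiring R] [Fintype σ] [DecidableEq σ]
    (d : σ →₀ ℕ) :
    ∑ s ∈ Fintype.piFinset (fun j => range (d j + 1)), ∏ j, ((d j).choose (s j) : R) =
      2 ^ d.degree := by
  rw [← prod_univ_sum (fun j => range (d j + 1)) fun j t => ((d j).choose t : R),
    Finsupp.degree_eq_sum, ← prod_pow_eq_pow_sum]
  refine prod_congr rfl fun j _ => ?_
  rw [← Nat.cast_sum, Nat.sum_range_choose, Nat.cast_pow, Nat.cast_ofNat]

namespace MvPolynomial

variable {σ : Type*} [Fintype σ] [DecidableEq σ]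

theorem sum_piFinset_prod_choose_mul_eval {K : Type*} [Field K] (p : MvPolynomial σ K) (d : σ →₀ ℕ)
    (hp : p.totalDegree ≤ d.degree) (a : σ → K) {h : K} (hh : h ≠ 0) :
    ∑ s ∈ Fintype.piFinset (fun j => range (d j + 1)),
        (∏ j, (-1 : K) ^ (d j - s j) * (d j).choose (s j)) * eval (fun j => a j + h * s j) p =
      (∏ j, ((d j)! : K)) * h ^ d.degree * coeff d p := by
  have hmonomial : ∀ e : σ →₀ ℕ,
      ∑ s ∈ Fintype.piFinset (fun j => range (d j + 1)),
          (∏ j, (-1 : K) ^ (d j - s j) * (d j).choose (s j)) * ∏ j, (a j + h * s j) ^ e j =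
        ∏ j, ∑ t ∈ range (d j + 1), (-1 : K) ^ (d j - t) * (d j).choose t * (a j + h * t) ^ e j :=
    fun e => by simp_rw [prod_univ_sum, ← prod_mul_distrib]
  simp_rw [eval_eq', mul_sum]
  rw [sum_comm]
  simp_rw [mul_left_comm _ (coeff _ p), ← mul_sum, hmonomial]
  rw [sum_eq_single d]
  · rw [prod_congr rfl fun j _ => alternating_sum_choose_mul_add_mul_pow (a j) hh le_rfl]
    simp only [↓reduceIte, prod_mul_distrib, prod_pow_eq_pow_sum, ← Finsupp.degree_eq_sum]
    ring
  · intro e he hne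
    obtain ⟨j, hj⟩ := Finsupp.exists_lt_apply_of_degree_le hne ((le_totalDegree he).trans hp)
    rw [prod_eq_zero (mem_univ j) (by rw [alternating_sum_choose_mul_add_mul_pow _ hh hj.le,
      if_neg hj.ne]), mul_zero]
  · intro hd
    rw [notMem_support_iff.1 hd, zero_mul]

theorem prod_factorial_mul_abs_coeff_le (p : MvPolynomial σ ℝ) (d : σ →₀ ℕ)
    (hp : p.totalDegree ≤ d.degree) {a : σ → ℝ} {ε M : ℝ} (hε : 0 < ε)
    (hM : ∀ w ∈ Metric.ball a ε, |eval w p| ≤ M) :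
    (∏ j, ((d j)! : ℝ)) * (ε / (d.degree + 1)) ^ d.degree * |coeff d p| ≤ 2 ^ d.degree * M := by
  set n := d.degree
  set h := ε / (n + 1)
  have hh : 0 < h := by positivity
  have hgrid : ∀ s ∈ Fintype.piFinset (fun j => range (d j + 1)),
      (fun j => a j + h * s j) ∈ Metric.ball a ε := by
    intro s hs
    rw [Metric.mem_ball, dist_pi_lt_iff hε]
    intro j
    have hsj : (s j : ℝ) ≤ n := by
      exact_mod_cast (Nat.lt_succ_iff.1 (mem_range.1 (Fintype.mem_piFinset.1 hs j))).trans
        (d.le_degree j)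
    rw [Real.dist_eq, add_sub_cancel_left, abs_of_nonneg (by positivity)]
    calc h * s j ≤ h * n := by gcongr
      _ < ε := by
        rw [div_mul_eq_mul_div, div_lt_iff₀ (by positivity)]
        linarith
  rw [← abs_of_pos (by positivity : (0 : ℝ) < (∏ j, ((d j)! : ℝ)) * h ^ n), ← abs_mul,
    ← sum_piFinset_prod_choose_mul_eval p d hp a hh.ne', ← sum_piFinset_prod_choose, sum_mul]
  refine (abs_sum_le_sum_abs _ _).trans (sum_le_sum fun s hs => ?_)
  rw [abs_mul, abs_prod]
  have hweight : ∀ j, |(-1 : ℝ) ^ (d j - s j) * (d j).choose (s j)| = (d j).choose (s j) :=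
    fun j => by rw [abs_mul, abs_pow, abs_neg, abs_one, one_pow, one_mul, Nat.abs_cast]
  simp_rw [hweight]
  exact mul_le_mul_of_nonneg_left (hM _ (hgrid s hs)) (by positivity)

theorem abs_coeff_mul_pow_le (p : MvPolynomial σ ℝ) (d : σ →₀ ℕ)
    (hp : p.totalDegree ≤ d.degree) {a : σ → ℝ} {ε M : ℝ} (hε : 0 < ε)
    (hM : ∀ w ∈ Metric.ball a ε, |eval w p| ≤ M) :
    |coeff d p| * (ε / (2 * Real.exp (Fintype.card σ))) ^ d.degree ≤
      M * Real.exp (Fintype.card σ) := by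
  set n := d.degree
  set E := Real.exp (Fintype.card σ)
  set F := ∏ j, ((d j)! : ℝ)
  have hF : 0 < F := prod_pos fun j _ => by positivity
  have hM0 : 0 ≤ M := (abs_nonneg _).trans (hM a (Metric.mem_ball_self hε))
  have hfact : ((n : ℝ) + 1) ^ n ≤ F * E ^ (n + 1) := by
    calc ((n : ℝ) + 1) ^ n ≤ F * Real.exp (n + 1) ^ Fintype.card σ :=
          d.pow_degree_le_prod_factorial_mul_exp_pow (by positivity)
      _ = F * E ^ (n + 1) := by
          rw [← Real.exp_nat_mul, ← Real.exp_nat_mul]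
          push_cast
          ring_nf
  have hbound := prod_factorial_mul_abs_coeff_le p d hp hε hM
  have hscaled : |coeff d p| * ε ^ n ≤ M * E * (2 * E) ^ n := by
    refine le_of_mul_le_mul_left ?_ hF
    calc F * (|coeff d p| * ε ^ n) = F * (ε / (n + 1)) ^ n * |coeff d p| * (n + 1) ^ n := by
          rw [div_pow]
          field_simp
      _ ≤ 2 ^ n * M * (n + 1) ^ n := mul_le_mul_of_nonneg_right hbound (by positivity)
      _ ≤ 2 ^ n * M * (F * E ^ (n + 1)) := by gcongr
      _ = F * (M * E * (2 * E) ^ n) := by ring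
  rwa [div_pow, mul_div_assoc', div_le_iff₀ (by positivity)]

end MvPolynomial

theorem exists_ball_forall_abs_mul_pow_le {X : Type*} [PseudoMetricSpace X] [BaireSpace X]
    [Nonempty X] {f : ℕ → X → ℝ} (hf : ∀ n, Continuous (f n))
    (hgrowth : ∀ x, ∃ r C : ℝ, 0 < r ∧ ∀ n, |f n x| * r ^ n ≤ C) :
    ∃ (a : X) (ε r C : ℝ), 0 < ε ∧ 0 < r ∧ ∀ x ∈ Metric.ball a ε, ∀ n, |f n x| * r ^ n ≤ C := by
  let E : ℕ × ℕ → Set X := fun p => {x | ∀ n, |f n x| * (1 / ((p.1 : ℝ) + 1)) ^ n ≤ p.2}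
  have hclosed : ∀ p, IsClosed (E p) := fun p => by
    simp only [E, Set.ofPred_forall]
    exact isClosed_iInter fun n => isClosed_le (by fun_prop) continuous_const
  have hcover : ⋃ p, E p = Set.univ := Set.eq_univ_of_forall fun x => by
    obtain ⟨r, C, hr, hC⟩ := hgrowth x
    obtain ⟨m, hm⟩ := exists_nat_one_div_lt hr
    obtain ⟨k, hk⟩ := exists_nat_ge C
    refine Set.mem_iUnion.2 ⟨(m, k), fun n => ?_⟩
    calc |f n x| * (1 / ((m : ℝ) + 1)) ^ n ≤ |f n x| * r ^ n := by gcongr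
      _ ≤ k := (hC n).trans hk
  obtain ⟨p, a, ha⟩ := nonempty_interior_of_iUnion_of_closed hclosed hcover
  obtain ⟨ε, hε, hball⟩ := Metric.mem_nhds_iff.1 (mem_interior_iff_mem_nhds.1 ha)
  exact ⟨a, ε, _, _, hε, by positivity, fun x hx => hball hx⟩

namespace MvPowerSeries

variable {σ R : Type*} [Finite σ] [CommSemiring R]

def homogeneousPart (n : ℕ) (T : MvPowerSeries σ R) : MvPolynomial σ R :=
  MvPolynomial.homogeneousComponent n (T.truncTotal (n + 1))

theorem coeff_homogeneousPart (n : ℕ) (T : MvPowerSeries σ R) (d : σ →₀ ℕ) :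
    (T.homogeneousPart n).coeff d = if d.degree = n then coeff d T else 0 := by
  rw [homogeneousPart, MvPolynomial.coeff_homogeneousComponent]
  split_ifs with hd
  · exact coeff_truncTotal _ (by omega)
  · rfl

theorem totalDegree_homogeneousPart_le (n : ℕ) (T : MvPowerSeries σ R) :
    (T.homogeneousPart n).totalDegree ≤ n :=
  (MvPolynomial.homogeneousComponent_isHomogeneous _ _).totalDegree_le

end MvPowerSeries

theorem coeff_lineSeries {N : ℕ} (T : MvPowerSeries (Fin N) ℝ) (v : Fin N → ℝ) (n : ℕ) :
    PowerSeries.coeff n (lineSeries T v) = MvPolynomial.eval v (T.homogeneousPart n) := by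
  rw [lineSeries, PowerSeries.coeff_mk, MvPolynomial.eval_eq']
  calc ∑' d : {d : Fin N →₀ ℕ // d.degree = n}, MvPowerSeries.coeff d.1 T * ∏ i, v i ^ d.1 i
      = ∑' d, (T.homogeneousPart n).coeff d * ∏ i, v i ^ d i := by
        refine (tsum_subtype {d : Fin N →₀ ℕ | d.degree = n}
          fun d => MvPowerSeries.coeff d T * ∏ i, v i ^ d i).trans ?_
        congr 1
        ext d
        simp only [Set.indicator, Set.mem_ofPred_eq, MvPowerSeries.coeff_homogeneousPart]
        split_ifs <;> simp
    _ = _ := tsum_eq_sum fun d hd => by rw [MvPolynomial.notMem_support_iff.1 hd, zero_mul]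

/-- If a formal power series `T` in `x ∈ ℝ^N` is such that `t ↦ T (t v)` is a convergent
power series in `t` for every `v ∈ ℝ^N`, then `T` is convergent. -/
theorem convergence_on_lines {N : ℕ} (T : MvPowerSeries (Fin N) ℝ)
    (h : ∀ v : Fin N → ℝ, PowerSeriesConvergent (lineSeries T v)) :
    MvPowerSeriesConvergent T := by
  obtain ⟨a, ε, r, C, hε, hr, hball⟩ := exists_ball_forall_abs_mul_pow_le
    (f := fun n v => MvPolynomial.eval v (T.homogeneousPart n))
    (fun n => MvPolynomial.continuous_eval _)
    (fun v => by simpa only [PowerSeriesConvergent, coeff_lineSeries] using h v)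
  refine ⟨r * (ε / (2 * Real.exp N)), C * Real.exp N, by positivity, fun d => ?_⟩
  have hcoeff := MvPolynomial.abs_coeff_mul_pow_le (T.homogeneousPart d.degree) d
    (T.totalDegree_homogeneousPart_le _) (M := C / r ^ d.degree) hε
    fun w hw => (le_div_iff₀ (by positivity)).2 (hball w hw _)
  rw [MvPowerSeries.coeff_homogeneousPart, if_pos rfl, Fintype.card_fin] at hcoeff
  change |MvPowerSeries.coeff d T| * _ ^ d.degree ≤ _
  calc |MvPowerSeries.coeff d T| * (r * (ε / (2 * Real.exp N))) ^ d.degree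
      = |MvPowerSeries.coeff d T| * (ε / (2 * Real.exp N)) ^ d.degree * r ^ d.degree := by ring
    _ ≤ C / r ^ d.degree * Real.exp N * r ^ d.degree := by gcongr
    _ = C * Real.exp N := by field_simp
end
end

section
/- Let X be a Stein manifold, and let K ⊂ X be a compact subset that is 𝒪(X)-convex (i.e., K equals its holomorphically convex hull with respect to global holomorphic functions on X). Then K = ∩_{k=1}^∞ U_k for a decreasing sequence of open Stein submanifolds U_k of X. -/
/-! The separating functions given by `𝒪(X)`-convexity of `K` form, by Lindelöf, a sequence
`gₙ` with `|gₙ| < 1` on `K` such that every point off `K` has `|gₙ| > 1` for some `n`. Fix a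
compact neighbourhood `M` of `K`; finitely many `gₙ` exceed `1` on the compact boundary of `M`.
Adding the remaining `gₙ` one at a time gives a decreasing sequence of analytic polyhedra
`{x ∈ M | |gₙ x| < 1 for n in a finite set}` with intersection `K`. Each is open, as the
boundary of `M` is cut away, and Stein, because the hull of a compact `L` in it stays in the
compact set where `M` and all `|gₙ| ≤ sup_L |gₙ|`, which lies inside the polyhedron. -/

open Set Topology Manifold

noncomputable section

variable (N : ℕ) (X : Type) [TopologicalSpace X] [ChartedSpace (Fin N → ℂ) X]

/-- `f : X → ℂ` is holomorphic on the open set `U ⊆ X`. -/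
def HolomorphicOnSet (U : Set X) (f : X → ℂ) : Prop :=
  ∀ x ∈ U, MDifferentiableAt 𝓘(ℂ, Fin N → ℂ) 𝓘(ℂ, ℂ) f x

/-- The hull of `S` in `U` with respect to functions holomorphic on `U`. -/
def holHullIn (U S : Set X) : Set X :=
  {x ∈ U | ∀ f : X → ℂ, HolomorphicOnSet N X U f →
    ‖f x‖ ≤ sSup ((fun y => ‖f y‖) '' S)}

/-- The open set `U ⊆ X` is a Stein open submanifold: it is holomorphically convex,
holomorphically separable, and global holomorphic functions on `U` give local
coordinates at each point. -/
def IsSteinOpen (U : Set X) : Prop :=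
  IsOpen U ∧
  (∀ K ⊆ U, IsCompact K → IsCompact (holHullIn N X U K)) ∧
  (∀ x ∈ U, ∀ y ∈ U, x ≠ y → ∃ f, HolomorphicOnSet N X U f ∧ f x ≠ f y) ∧
  (∀ x ∈ U, ∃ f : X → Fin N → ℂ, (∀ i, HolomorphicOnSet N X U (fun y => f y i)) ∧
    ∃ W ∈ nhds x, W ⊆ U ∧ InjOn f W)

/-- The image of `A ⊆ X` in the chart at `p`. -/
def chartIm (A : Set X) (p : X) : Set (Fin N → ℂ) :=
  (chartAt (Fin N → ℂ) p) '' (A ∩ (chartAt (Fin N → ℂ) p).source)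

/-- The image of the point `p` in the chart at `p`. -/
def chartPt (p : X) : Fin N → ℂ := chartAt (Fin N → ℂ) p p

variable {N X}

theorem HolomorphicOnSet.mono {U V : Set X} {f : X → ℂ} (hf : HolomorphicOnSet N X V f)
    (hUV : U ⊆ V) : HolomorphicOnSet N X U f :=
  fun x hx => hf x (hUV hx)

theorem HolomorphicOnSet.continuousOn {U : Set X} {f : X → ℂ} (hf : HolomorphicOnSet N X U f) :
    ContinuousOn f U :=
  continuousOn_of_forall_continuousAt fun x hx => (hf x hx).continuousAt

theorem HolomorphicOnSet.continuous {f : X → ℂ} (hf : HolomorphicOnSet N X univ f) :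
    Continuous f :=
  continuousOn_univ.1 hf.continuousOn

theorem isCompact_holHullIn_of_subset [T2Space X] {U S C : Set X} (hC : IsCompact C)
    (hCU : C ⊆ U) (hhull : holHullIn N X U S ⊆ C) : IsCompact (holHullIn N X U S) := by
  refine hC.of_isClosed_subset (isClosed_of_closure_subset fun x hx => ?_) hhull
  have hxU : x ∈ U := hCU (closure_minimal hhull hC.isClosed hx)
  refine ⟨hxU, fun f hf => ?_⟩
  exact ContinuousWithinAt.closure_le hx (hf x hxU).continuousAt.norm.continuousWithinAt
    continuousWithinAt_const fun y hy => hy.2 f hf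

theorem IsSteinOpen.of_holHullIn_subset_compact [T2Space X] (hX : IsSteinOpen N X univ)
    {U : Set X} (hU : IsOpen U)
    (hhull : ∀ L ⊆ U, IsCompact L → ∃ C, IsCompact C ∧ C ⊆ U ∧ holHullIn N X U L ⊆ C) :
    IsSteinOpen N X U := by
  refine ⟨hU, fun L hLU hL => ?_, fun x _ y _ hxy => ?_, fun x hx => ?_⟩
  · obtain ⟨C, hC, hCU, hLC⟩ := hhull L hLU hL
    exact isCompact_holHullIn_of_subset hC hCU hLC
  · obtain ⟨f, hf, hfxy⟩ := hX.2.2.1 x (mem_univ x) y (mem_univ y) hxy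
    exact ⟨f, hf.mono (subset_univ U), hfxy⟩
  · obtain ⟨f, hf, W, hW, -, hinj⟩ := hX.2.2.2 x (mem_univ x)
    exact ⟨f, fun i => (hf i).mono (subset_univ U), W ∩ U,
      Filter.inter_mem hW (hU.mem_nhds hx), inter_subset_right, hinj.mono inter_subset_left⟩

def polyhedron {α ι E : Type*} [SeminormedAddGroup E] (M : Set α) (g : ι → α → E)
    (s : Finset ι) : Set α :=
  {x ∈ M | ∀ i ∈ s, ‖g i x‖ < 1}

theorem IsCompact.sSup_norm_image_lt {α E : Type*} [TopologicalSpace α] [SeminormedAddGroup E]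
    {L : Set α} {f : α → E} {c : ℝ} (hL : IsCompact L) (hf : ContinuousOn f L) (hc : 0 < c)
    (hlt : ∀ x ∈ L, ‖f x‖ < c) : sSup ((fun y => ‖f y‖) '' L) < c := by
  rcases L.eq_empty_or_nonempty with rfl | hne
  · simpa using hc
  · exact (hL.sSup_lt_iff_of_continuous hne hf.norm c).2 hlt

theorem isOpen_polyhedron {α ι E : Type*} [TopologicalSpace α] [SeminormedAddGroup E]
    {M : Set α} {g : ι → α → E} {s : Finset ι} (hg : ∀ i ∈ s, Continuous (g i))
    (hbdry : ∀ x ∈ M \ interior M, ∃ i ∈ s, 1 ≤ ‖g i x‖) :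
    IsOpen (polyhedron M g s) := by
  have heq : polyhedron M g s = interior M ∩ ⋂ i ∈ s, {x | ‖g i x‖ < 1} := by
    ext x
    simp only [mem_ofPred_eq, mem_inter_iff, mem_iInter]
    refine ⟨fun ⟨hxM, hx⟩ => ⟨?_, hx⟩, fun ⟨hxi, hx⟩ => ⟨interior_subset hxi, hx⟩⟩
    by_contra hxi
    obtain ⟨i, hi, hgi⟩ := hbdry x ⟨hxM, hxi⟩
    exact (hx i hi).not_ge hgi
  rw [heq]
  exact isOpen_interior.inter <| isOpen_biInter_finset fun i hi =>
    isOpen_lt (hg i hi).norm continuous_const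

theorem isSteinOpen_polyhedron [T2Space X] {ι : Type*} (hX : IsSteinOpen N X univ) {M : Set X}
    (hM : IsCompact M) {g : ι → X → ℂ} {s : Finset ι}
    (hg : ∀ i ∈ s, HolomorphicOnSet N X univ (g i))
    (hopen : IsOpen (polyhedron M g s)) : IsSteinOpen N X (polyhedron M g s) := by
  refine hX.of_holHullIn_subset_compact hopen fun L hLP hL => ?_
  refine ⟨M ∩ ⋂ i ∈ s, {x | ‖g i x‖ ≤ sSup ((fun y => ‖g i y‖) '' L)}, ?_, ?_, ?_⟩
  · exact hM.inter_right <| isClosed_biInter fun i hi =>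
      isClosed_le (hg i hi).continuous.norm continuous_const
  · rintro x ⟨hxM, hx⟩
    refine ⟨hxM, fun i hi => (mem_iInter₂.1 hx i hi).trans_lt ?_⟩
    exact hL.sSup_norm_image_lt (hg i hi).continuous.continuousOn one_pos
      fun y hy => (hLP hy).2 i hi
  · rintro x ⟨⟨hxM, -⟩, hx⟩
    exact ⟨hxM, mem_iInter₂.2 fun i hi => hx (g i) ((hg i hi).mono (subset_univ _))⟩

theorem exists_holomorphic_separating {K : Set X} (hK : IsCompact K)
    (hconv : holHullIn N X univ K = K) {p : X} (hp : p ∉ K) :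
    ∃ g : X → ℂ, HolomorphicOnSet N X univ g ∧ (∀ y ∈ K, ‖g y‖ < 1) ∧ 1 < ‖g p‖ := by
  rw [← hconv] at hp
  obtain ⟨f, hf, hfp⟩ : ∃ f, HolomorphicOnSet N X univ f ∧
      sSup ((fun y => ‖f y‖) '' K) < ‖f p‖ := by
    simpa [holHullIn] using hp
  set s := sSup ((fun y => ‖f y‖) '' K)
  have hfK : ∀ y ∈ K, ‖f y‖ ≤ s := fun y hy =>
    le_csSup (hK.bddAbove_image hf.continuous.norm.continuousOn) (mem_image_of_mem _ hy)
  have hs : 0 ≤ s := Real.sSup_nonneg <| by rintro _ ⟨y, -, rfl⟩; exact norm_nonneg _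
  obtain ⟨c, hsc, hcp⟩ := exists_between hfp
  have hc : 0 < c := hs.trans_lt hsc
  have hnorm : ∀ y, ‖((c : ℂ)⁻¹ • f) y‖ = ‖f y‖ / c := fun y => by
    simp [abs_of_pos hc, div_eq_inv_mul]
  refine ⟨(c : ℂ)⁻¹ • f, fun x _ => (hf x (mem_univ x)).const_smul _, fun y hy => ?_, ?_⟩
  · rw [hnorm, div_lt_one hc]
    exact (hfK y hy).trans_lt hsc
  · rwa [hnorm, one_lt_div hc]

theorem exists_seq_holomorphic_separating [SecondCountableTopology X] {K : Set X}
    (hK : IsCompact K) (hconv : holHullIn N X univ K = K) :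
    ∃ g : ℕ → X → ℂ, (∀ n, HolomorphicOnSet N X univ (g n)) ∧ (∀ n, ∀ y ∈ K, ‖g n y‖ < 1) ∧
      ∀ p ∉ K, ∃ n, 1 < ‖g n p‖ := by
  set G := {g : X → ℂ | HolomorphicOnSet N X univ g ∧ ∀ y ∈ K, ‖g y‖ < 1}
  obtain ⟨T, hTG, hT, hTcover⟩ := TopologicalSpace.isOpen_biUnion_countable G
    (fun g => {x | 1 < ‖g x‖}) fun g hg => isOpen_lt continuous_const hg.1.continuous.norm
  have hzero : (0 : X → ℂ) ∈ G := ⟨fun x _ => mdifferentiableAt_const, by simp⟩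
  -- `T` may be empty (when `K = X`); inserting `0 ∈ G` keeps the family nonempty
  obtain ⟨g, hg⟩ := (hT.insert 0).exists_eq_range (insert_nonempty 0 T)
  have hgG : ∀ n, g n ∈ G := fun n =>
    (insert_subset hzero hTG) (hg ▸ mem_range_self n)
  refine ⟨g, fun n => (hgG n).1, fun n => (hgG n).2, fun p hp => ?_⟩
  obtain ⟨f, hf, hfK, hfp⟩ := exists_holomorphic_separating hK hconv hp
  have hpT : p ∈ ⋃ g ∈ T, {x | 1 < ‖g x‖} := hTcover ▸ mem_biUnion (x := f) ⟨hf, hfK⟩ hfp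
  obtain ⟨h, hhT, hhp⟩ := mem_iUnion₂.1 hpT
  obtain ⟨n, rfl⟩ : h ∈ range g := hg ▸ mem_insert_of_mem 0 hhT
  exact ⟨n, hhp⟩

theorem stein_neighborhood_basis_of_OX_convex_general
    {N : ℕ} {X : Type} [TopologicalSpace X] [T2Space X]
    [SecondCountableTopology X] [ChartedSpace (Fin N → ℂ) X]
    (hStein : IsSteinOpen N X univ)
    (K : Set X) (hK : IsCompact K)
    (hconv : holHullIn N X univ K = K) :
    ∃ U : ℕ → Set X, (∀ k, IsSteinOpen N X (U k)) ∧ Antitone U ∧ K = ⋂ k, U k := by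
  have := ChartedSpace.locallyCompactSpace (Fin N → ℂ) X
  obtain ⟨g, hg, hgK, hgsep⟩ := exists_seq_holomorphic_separating hK hconv
  obtain ⟨M, hM, hKM⟩ := exists_compact_superset hK
  obtain ⟨t, ht⟩ := (hM.diff isOpen_interior).elim_finite_subcover (fun n => {x | 1 < ‖g n x‖})
    (fun n => isOpen_lt continuous_const (hg n).continuous.norm) fun x hx =>
      mem_iUnion.2 (hgsep x fun hxK => hx.2 (hKM hxK))
  refine ⟨fun k => polyhedron M g (t ∪ Finset.range k), fun k => ?_, ?_, ?_⟩
  · refine isSteinOpen_polyhedron hStein hM (fun n _ => hg n) (isOpen_polyhedron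
      (fun n _ => (hg n).continuous) fun x hx => ?_)
    obtain ⟨n, hn, hnx⟩ := mem_iUnion₂.1 (ht hx)
    exact ⟨n, Finset.mem_union_left _ hn, hnx.le⟩
  · intro k l hkl x ⟨hxM, hx⟩
    exact ⟨hxM, fun n hn => hx n (Finset.union_subset_union_right (Finset.range_mono hkl) hn)⟩
  · refine Subset.antisymm (fun y hy => mem_iInter.2 fun k =>
      ⟨interior_subset (hKM hy), fun n _ => hgK n y hy⟩) fun x hx => by_contra fun hxK => ?_
    obtain ⟨n, hn⟩ := hgsep x hxK
    exact (((mem_iInter.1 hx (n + 1)).2 n (by simp)).trans hn).false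

/-- **Rossi's lemma.**  Let `X` be a Stein manifold and `K ⊆ X` a compact set that is
`𝒪(X)`-convex.  Then `K` is the intersection of a decreasing sequence of open Stein
submanifolds of `X`. -/
theorem stein_neighborhood_basis_of_OX_convex
    {N : ℕ} {X : Type} [TopologicalSpace X] [T2Space X]
    [SecondCountableTopology X] [ChartedSpace (Fin N → ℂ) X]
    [IsManifold 𝓘(ℂ, Fin N → ℂ) (⊤ : ℕ∞) X]
    (hStein : IsSteinOpen N X univ)
    (K : Set X) (hK : IsCompact K)
    (hconv : holHullIn N X univ K = K) :
    ∃ U : ℕ → Set X, (∀ k, IsSteinOpen N X (U k)) ∧ Antitone U ∧ K = ⋂ k, U k :=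
  stein_neighborhood_basis_of_OX_convex_general hStein K hK hconv
end
end

section
/- Let ρ be a real-valued C^2 function on an open set in ℂ^N with dρ ≠ 0 on {ρ = 0}. Then the hypersurface {ρ = 0} is Levi-flat if and only if the complex bordered Hessian matrix [[ρ, ρ_z],[ρ_{z̄}, ρ_{zz̄}]] (the (N+1)×(N+1) matrix with entries ρ, the row vector of ρ_{z_j}, the column vector of ρ_{z̄_k}, and the complex Hessian ρ_{z_j z̄_k}) has rank equal to 2 at every point of {ρ = 0}. -/
/-!
At a point of `{ρ = 0}` write `a = ρ_z`, which is nonzero because `dρ ≠ 0` and `ρ` is real, and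
`G = (ρ_{z_j z̄_k})`. Since `ρ_{z̄} = conj ρ_z`, the bordered Hessian there is `[[0, aᵀ], [ā, Gᵀ]]`,
and both conditions turn out to be equivalent to `G = a βᵀ + γ āᵀ` for some vectors `β, γ`.

For the Levi form, complex polarization makes the sesquilinear form of `G` vanish on `T × T`, where
`T = {w | a ⬝ w = 0}`; splitting every vector along `T ⊕ ℂ e` with `a ⬝ e = 1` then produces `β`
and `γ`.
For the rank, pick `a_{j₀} ≠ 0`: the rows `(0, a)` and `(ā_{j₀}, G_{· j₀})` are independent, so
the rank is `2` iff every row `(ā_k, G_{· k})` is a combination of these two, which unwinds to the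
same decomposition.
-/

open Set

noncomputable section

variable {N : ℕ}

/-- The Wirtinger derivative `∂g/∂z_j` for `g : ℂ^N → ℂ` (via the real derivative). -/
def wz (g : (Fin N → ℂ) → ℂ) (j : Fin N) (x : Fin N → ℂ) : ℂ :=
  (fderiv ℝ g x (Pi.single j 1) - Complex.I * fderiv ℝ g x (Pi.single j Complex.I)) / 2

/-- The conjugate Wirtinger derivative `∂g/∂z̄_j`. -/
def wzbar (g : (Fin N → ℂ) → ℂ) (j : Fin N) (x : Fin N → ℂ) : ℂ :=
  (fderiv ℝ g x (Pi.single j 1) + Complex.I * fderiv ℝ g x (Pi.single j Complex.I)) / 2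

/-- `ρ_{z_j}` for a real-valued `ρ`. -/
def rhoZ (ρ : (Fin N → ℂ) → ℝ) (j : Fin N) (x : Fin N → ℂ) : ℂ :=
  wz (fun y => (ρ y : ℂ)) j x

/-- `ρ_{z̄_j}` for a real-valued `ρ`. -/
def rhoZbar (ρ : (Fin N → ℂ) → ℝ) (j : Fin N) (x : Fin N → ℂ) : ℂ :=
  wzbar (fun y => (ρ y : ℂ)) j x

/-- The complex Hessian entry `ρ_{z_j z̄_k}`. -/
def rhoZZbar (ρ : (Fin N → ℂ) → ℝ) (j k : Fin N) (x : Fin N → ℂ) : ℂ :=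
  wzbar (fun y => rhoZ ρ j y) k x

/-- The complex bordered Hessian `[[ρ, ρ_z], [ρ_{z̄}, ρ_{z z̄}]]`, an
`(N+1) × (N+1)` matrix. -/
def borderedHessian (ρ : (Fin N → ℂ) → ℝ) (x : Fin N → ℂ) :
    Matrix (Unit ⊕ Fin N) (Unit ⊕ Fin N) ℂ :=
  Matrix.fromBlocks (fun _ _ => (ρ x : ℂ)) (fun _ j => rhoZ ρ j x)
    (fun k _ => rhoZbar ρ k x) (fun k j => rhoZZbar ρ j k x)

open Matrix

theorem differentiableAt_of_fderiv_ne_zero {𝕜 E F : Type*} [NontriviallyNormedField 𝕜]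
    [NormedAddCommGroup E] [NormedSpace 𝕜 E] [NormedAddCommGroup F] [NormedSpace 𝕜 F]
    {f : E → F} {x : E} (h : fderiv 𝕜 f x ≠ 0) : DifferentiableAt 𝕜 f x :=
  by_contra fun hf => h (fderiv_zero_of_not_differentiableAt hf)

theorem fderiv_ofReal_comp_apply {E : Type*} [NormedAddCommGroup E] [NormedSpace ℝ E]
    {f : E → ℝ} {x : E} (h : DifferentiableAt ℝ f x) (v : E) :
    fderiv ℝ (fun y => (f y : ℂ)) x v = fderiv ℝ f x v := by
  have : HasFDerivAt (fun y => (f y : ℂ)) (Complex.ofRealCLM.comp (fderiv ℝ f x)) x :=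
    Complex.ofRealCLM.hasFDerivAt.comp x h.hasFDerivAt
  rw [this.fderiv]
  rfl

theorem LinearMap.apply_eq_zero_of_apply_self_eq_zero {V : Type*} [AddCommGroup V]
    [Module ℂ V] (B : V →ₗ[ℂ] V →ₗ⋆[ℂ] ℂ) {K : Submodule ℂ V} (h : ∀ w ∈ K, B w w = 0)
    {u v : V} (hu : u ∈ K) (hv : v ∈ K) : B u v = 0 := by
  have h₁ := h (u + v) (K.add_mem hu hv)
  have h₂ := h (u + Complex.I • v) (K.add_mem hu (K.smul_mem _ hv))
  simp only [map_add, map_smulₛₗ, LinearMap.add_apply, LinearMap.smul_apply, h u hu, h v hv,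
    RingHom.id_apply, Complex.conj_I, smul_eq_mul] at h₁ h₂
  linear_combination (h₁ + Complex.I * h₂) / 2 + (B u v - B v u) / 2 * Complex.I_sq

theorem finrank_span_range_eq_two_iff {K V ι : Type*} [Field K] [AddCommGroup V] [Module K V]
    {v : ι → V} {i₀ i₁ : ι} (h : LinearIndependent K ![v i₀, v i₁]) :
    Module.finrank K (Submodule.span K (Set.range v)) = 2 ↔
      ∀ i, v i ∈ Submodule.span K {v i₀, v i₁} := by
  have hpair : Module.finrank K (Submodule.span K {v i₀, v i₁}) = 2 := by
    rw [← Matrix.range_cons_cons_empty _ _ ![], finrank_span_eq_card h, Fintype.card_fin]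
  have hle : Submodule.span K {v i₀, v i₁} ≤ Submodule.span K (Set.range v) :=
    Submodule.span_mono (Set.pair_subset ⟨i₀, rfl⟩ ⟨i₁, rfl⟩)
  constructor
  · intro hv i
    have : FiniteDimensional K (Submodule.span K (Set.range v)) :=
      Module.finite_of_finrank_pos (by omega)
    rw [Submodule.eq_of_le_of_finrank_eq hle (hpair.trans hv.symm)]
    exact Submodule.subset_span ⟨i, rfl⟩
  · intro hv
    rwa [le_antisymm (Submodule.span_le.2 (Set.range_subset_iff.2 hv)) hle]

namespace Matrix

variable {ι : Type*} [Fintype ι] [DecidableEq ι]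

local notation "sesq" => toLinearMapₛₗ₂' ℂ (RingHom.id ℂ) (starRingEnd ℂ)

theorem toLinearMapₛₗ₂'_starRingEnd_apply (G : Matrix ι ι ℂ) (u v : ι → ℂ) :
    sesq G u v = ∑ j, ∑ k, G j k * u j * starRingEnd ℂ (v k) := by
  simp only [toLinearMapₛₗ₂'_apply, RingHom.id_apply, smul_eq_mul]
  exact Finset.sum_congr rfl fun _ _ => Finset.sum_congr rfl fun _ _ => by ring

theorem toLinearMapₛₗ₂'_vecMulVec (x y u v : ι → ℂ) :
    sesq (vecMulVec x y) u v = (x ⬝ᵥ u) * (y ⬝ᵥ star v) := by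
  simp only [toLinearMapₛₗ₂'_apply, vecMulVec_apply, dotProduct, Finset.sum_mul_sum,
    RingHom.id_apply, smul_eq_mul, Pi.star_apply, starRingEnd_apply]
  exact Finset.sum_congr rfl fun _ _ => Finset.sum_congr rfl fun _ _ => by ring

theorem toLinearMapₛₗ₂'_apply_self_eq_zero_on_ker_iff {a : ι → ℂ} (ha : a ≠ 0)
    (G : Matrix ι ι ℂ) :
    (∀ w, a ⬝ᵥ w = 0 → sesq G w w = 0) ↔
      ∃ β γ : ι → ℂ, G = vecMulVec a β + vecMulVec γ (star a) := by
  constructor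
  · intro h
    obtain ⟨j₀, hj₀⟩ : ∃ j, a j ≠ 0 := Function.ne_iff.1 ha
    set e : ι → ℂ := Pi.single j₀ (a j₀)⁻¹
    have he : a ⬝ᵥ e = 1 := by simp [e, dotProduct_single, hj₀]
    have hB : ∀ u v, sesq G (u - (a ⬝ᵥ u) • e) (v - (a ⬝ᵥ v) • e) = 0 := fun u v =>
      (sesq G).apply_eq_zero_of_apply_self_eq_zero (K := LinearMap.ker (dotProductEquiv ℂ ι a))
        h (by simp [dotProduct_sub, he]) (by simp [dotProduct_sub, he])
    have key : ∀ u v, sesq G u v =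
        (a ⬝ᵥ u) * sesq G e v + star (a ⬝ᵥ v) * sesq G (u - (a ⬝ᵥ u) • e) e := by
      intro u v
      have := hB u v
      simp only [map_sub, map_smulₛₗ, LinearMap.sub_apply, LinearMap.smul_apply, RingHom.id_apply,
        smul_eq_mul, starRingEnd_apply] at this ⊢
      linear_combination this
    refine ⟨fun k => sesq G e (Pi.single k 1), fun j => sesq G (Pi.single j 1 - a j • e) e, ?_⟩
    ext j k
    rw [← toLinearMapₛₗ₂'_single (R := ℂ) (RingHom.id ℂ) (starRingEnd ℂ) G j k, key]
    simp [dotProduct_single, vecMulVec_apply, mul_comm]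
  · rintro ⟨β, γ, rfl⟩ w hw
    rw [map_add, LinearMap.add_apply, LinearMap.add_apply, toLinearMapₛₗ₂'_vecMulVec,
      toLinearMapₛₗ₂'_vecMulVec, star_dotProduct_star, dotProduct_comm w, hw, star_zero,
      zero_mul, mul_zero, add_zero]

end Matrix

section BorderedMatrix

variable {ι : Type*}

def borderedMatrix (a : ι → ℂ) (G : Matrix ι ι ℂ) : Matrix (Unit ⊕ ι) (Unit ⊕ ι) ℂ :=
  fromBlocks 0 (replicateRow Unit a) (replicateCol Unit (star a)) Gᵀ

variable (a : ι → ℂ) (G : Matrix ι ι ℂ) (u v : Unit) (j k : ι)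

@[simp] theorem borderedMatrix_inl_inl : borderedMatrix a G (.inl u) (.inl v) = 0 := rfl

@[simp] theorem borderedMatrix_inl_inr : borderedMatrix a G (.inl u) (.inr j) = a j := rfl

@[simp] theorem borderedMatrix_inr_inl : borderedMatrix a G (.inr k) (.inl u) = star (a k) := rfl

@[simp] theorem borderedMatrix_inr_inr : borderedMatrix a G (.inr k) (.inr j) = G j k := rfl

variable {a} {j₀ : ι}

theorem linearIndependent_row_borderedMatrix (hj₀ : a j₀ ≠ 0) :
    LinearIndependent ℂ
      ![(borderedMatrix a G).row (.inl ()), (borderedMatrix a G).row (.inr j₀)] := by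
  refine LinearIndependent.pair_iff.2 fun s t hst => ?_
  have h₁ := congrFun hst (.inl ())
  have h₂ := congrFun hst (.inr j₀)
  have ht : t = 0 := by simpa [hj₀] using h₁
  exact ⟨by simpa [ht, hj₀] using h₂, ht⟩

theorem rank_borderedMatrix_eq_two_iff [Fintype ι] (ha : a ≠ 0) :
    (borderedMatrix a G).rank = 2 ↔
      ∃ β γ : ι → ℂ, G = vecMulVec a β + vecMulVec γ (star a) := by
  obtain ⟨j₀, hj₀⟩ : ∃ j, a j ≠ 0 := Function.ne_iff.1 ha
  have hj₀' : star (a j₀) ≠ 0 := star_ne_zero.2 hj₀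
  rw [rank_eq_finrank_span_row,
    finrank_span_range_eq_two_iff (linearIndependent_row_borderedMatrix G hj₀), Sum.forall,
    and_iff_right fun _ => Submodule.mem_span_of_mem (Set.mem_insert _ _)]
  constructor
  · intro h
    choose x y hxy using fun k => Submodule.mem_span_pair.1 (h k)
    refine ⟨x, fun j => G j j₀ / star (a j₀), ?_⟩
    ext j k
    have h₁ := congrFun (hxy k) (.inl ())
    have h₂ := congrFun (hxy k) (.inr j)
    simp only [Pi.add_apply, Pi.smul_apply, row_apply, smul_eq_mul, borderedMatrix_inl_inl,
      borderedMatrix_inr_inl, borderedMatrix_inl_inr, borderedMatrix_inr_inr, mul_zero,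
      zero_add] at h₁ h₂
    rw [← h₂, Matrix.add_apply, vecMulVec_apply, vecMulVec_apply, Pi.star_apply, ← h₁]
    field_simp
  · rintro ⟨β, γ, hG⟩ k
    refine Submodule.mem_span_pair.2
      ⟨β k - star (a k) * β j₀ / star (a j₀), star (a k) / star (a j₀), ?_⟩
    ext (_ | j)
    · simp only [Pi.add_apply, Pi.smul_apply, row_apply, smul_eq_mul, borderedMatrix_inl_inl,
        borderedMatrix_inr_inl, mul_zero, zero_add]
      field_simp
    · simp only [Pi.add_apply, Pi.smul_apply, row_apply, smul_eq_mul, borderedMatrix_inl_inr,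
        borderedMatrix_inr_inr, hG, Matrix.add_apply, vecMulVec_apply, Pi.star_apply]
      field_simp
      ring

end BorderedMatrix

section WirtingerDerivatives

variable {ρ : (Fin N → ℂ) → ℝ} {x : Fin N → ℂ}

theorem rhoZ_eq (h : DifferentiableAt ℝ ρ x) (j : Fin N) :
    rhoZ ρ j x = ((fderiv ℝ ρ x (Pi.single j 1) : ℂ) -
      Complex.I * fderiv ℝ ρ x (Pi.single j Complex.I)) / 2 := by
  simp only [rhoZ, wz, fderiv_ofReal_comp_apply h]

theorem rhoZbar_eq_star_rhoZ (h : DifferentiableAt ℝ ρ x) (j : Fin N) :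
    rhoZbar ρ j x = star (rhoZ ρ j x) := by
  simp [rhoZ_eq h, rhoZbar, wzbar, fderiv_ofReal_comp_apply h]

theorem rhoZ_ne_zero (h : fderiv ℝ ρ x ≠ 0) : (fun j => rhoZ ρ j x) ≠ 0 := by
  have hd := differentiableAt_of_fderiv_ne_zero h
  contrapose! h
  refine ContinuousLinearMap.coe_injective
    ((Pi.basis fun _ => Complex.basisOneI).ext fun ⟨j, i⟩ => ?_)
  have := congrFun h j
  rw [rhoZ_eq hd, Complex.ext_iff] at this
  fin_cases i <;> simp_all

theorem borderedHessian_eq_borderedMatrix (h : DifferentiableAt ℝ ρ x) (hx : ρ x = 0) :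
    borderedHessian ρ x =
      borderedMatrix (fun j => rhoZ ρ j x) (of fun j k => rhoZZbar ρ j k x) := by
  rw [borderedHessian, borderedMatrix, hx]
  congr 1
  ext
  simp [rhoZbar_eq_star_rhoZ h]

end WirtingerDerivatives

theorem leviFlat_iff_borderedHessian_rank_two_general (U : Set (Fin N → ℂ))
    (ρ : (Fin N → ℂ) → ℝ)
    (hdρ : ∀ x ∈ U, ρ x = 0 → fderiv ℝ ρ x ≠ 0) :
    (∀ x ∈ U, ρ x = 0 → ∀ w : Fin N → ℂ,
        (∑ j, rhoZ ρ j x * w j) = 0 →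
        (∑ j, ∑ k, rhoZZbar ρ j k x * w j * starRingEnd ℂ (w k)) = 0) ↔
      (∀ x ∈ U, ρ x = 0 → (borderedHessian ρ x).rank = 2) := by
  refine forall₃_congr fun x hx hx₀ => ?_
  have ha := rhoZ_ne_zero (hdρ x hx hx₀)
  have hd := differentiableAt_of_fderiv_ne_zero (hdρ x hx hx₀)
  rw [borderedHessian_eq_borderedMatrix hd hx₀,
    rank_borderedMatrix_eq_two_iff _ ha, ← toLinearMapₛₗ₂'_apply_self_eq_zero_on_ker_iff ha]
  simp only [toLinearMapₛₗ₂'_starRingEnd_apply, of_apply]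
  rfl

/-- For a `C²` real-valued `ρ` on an open set `U ⊆ ℂ^N` with `dρ ≠ 0` on `{ρ = 0}`, the
hypersurface `{ρ = 0}` is Levi-flat (the Levi form vanishes on complex tangent vectors)
iff the complex bordered Hessian has rank `2` at every point of `{ρ = 0}`. -/
theorem leviFlat_iff_borderedHessian_rank_two (U : Set (Fin N → ℂ)) (hU : IsOpen U)
    (ρ : (Fin N → ℂ) → ℝ) (hρ : ContDiffOn ℝ 2 ρ U)
    (hdρ : ∀ x ∈ U, ρ x = 0 → fderiv ℝ ρ x ≠ 0) :
    (∀ x ∈ U, ρ x = 0 → ∀ w : Fin N → ℂ,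
        (∑ j, rhoZ ρ j x * w j) = 0 →
        (∑ j, ∑ k, rhoZZbar ρ j k x * w j * starRingEnd ℂ (w k)) = 0) ↔
      (∀ x ∈ U, ρ x = 0 → (borderedHessian ρ x).rank = 2) :=
  leviFlat_iff_borderedHessian_rank_two_general U ρ hdρ

end
end
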